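/- arXiv:math/0303239 — 6 statements merged into one kernel-verified Lean document; each statement's English description precedes it below -/
import Mathlib

section
/- If X is a hereditarily separable topological space and Y is a second countable topological space, then the product space X × Y is hereditarily separable. -/
open TopologicalSpace Set

/-- From a separable subspace, extract a countable subset whose closure contains the set. -/
lemma exists_countable_dense_inside {X : Type*} [TopologicalSpace X] (A : Set X)
    [SeparableSpace A] : ∃ E : Set X, E ⊆ A ∧ E.Countable ∧ A ⊆ closure E := by
  obtain ⟨D, Dc, Dd⟩ := TopologicalSpace.exists_countable_dense A
  refine ⟨Subtype.val '' D, by rintro x ⟨d, _, rfl⟩; exact d.2, Dc.image _, ?_⟩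
  intro x hx
  have : (⟨x, hx⟩ : A) ∈ closure D := Dd _
  exact (closure_subtype.mp this)

/-- A topological space is hereditarily separable iff every subspace is separable. -/
def HereditarilySeparable (X : Type*) [TopologicalSpace X] : Prop :=
  ∀ s : Set X, TopologicalSpace.SeparableSpace s

/-- If `X` is hereditarily separable and `Y` is second countable,
then `X × Y` is hereditarily separable. -/
theorem hs_prod_second_countable {X Y : Type*} [TopologicalSpace X] [TopologicalSpace Y]
    [SecondCountableTopology Y] (hX : HereditarilySeparable X) :
    HereditarilySeparable (X × Y) := by
  intro s
  cases isEmpty_or_nonempty Y with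
  | inl h => exact TopologicalSpace.Countable.to_separableSpace
  | inr h => ?_
  obtain ⟨B, Bcount, -, Bbasis⟩ := exists_countable_basis Y
  -- For each basis set b, the slice projection
  set A : Set Y → Set X := fun b => {x | ∃ y ∈ b, (x, y) ∈ s} with hA
  -- countable dense-inside subsets of each A b
  have hAE : ∀ b : Set Y, ∃ E : Set X, E ⊆ A b ∧ E.Countable ∧ A b ⊆ closure E := by
    intro b
    haveI := hX (A b)
    exact exists_countable_dense_inside (A b)
  choose E hEsub hEc hEd using hAE
  -- choose witnesses: for x ∈ A b, a point y with y ∈ b and (x,y) ∈ s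
  have hwit : ∀ b : Set Y, ∀ x ∈ E b, ∃ y, y ∈ b ∧ (x, y) ∈ s := by
    intro b x hx
    obtain ⟨y, hy, hxy⟩ := hEsub b hx
    exact ⟨y, hy, hxy⟩
  choose! w hw1 hw2 using hwit
  -- the candidate countable dense set in s
  set T : Set (X × Y) := ⋃ b ∈ B, (fun x => (x, w b x)) '' (E b) with hT
  have hTs : T ⊆ s := by
    rintro p hp
    simp only [hT, mem_iUnion] at hp
    obtain ⟨b, hb, x, hx, rfl⟩ := hp
    exact hw2 b x hx
  have hTc : T.Countable := by
    refine Countable.biUnion Bcount fun b _ => ?_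
    exact (hEc b).image _
  have hTd : s ⊆ closure T := by
    rintro ⟨x, y⟩ hxy
    rw [mem_closure_iff]
    intro U hU hxyU
    obtain ⟨u, v, hu, hv, hxu, hyv, huv⟩ := isOpen_prod_iff.mp hU x y hxyU
    obtain ⟨b, hbB, hyb, hbv⟩ := Bbasis.exists_subset_of_mem_open hyv hv
    have hxA : x ∈ A b := ⟨y, hyb, hxy⟩
    have := hEd b hxA
    rw [mem_closure_iff] at this
    obtain ⟨x', hx'u, hx'E⟩ := this u hu hxu
    refine ⟨(x', w b x'), huv ⟨hx'u, hbv (hw1 b x' hx'E)⟩, ?_⟩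
    simp only [hT, mem_iUnion]
    exact ⟨b, hbB, x', hx'E, rfl⟩
  -- conclude separability of the subtype
  constructor
  refine ⟨Subtype.val ⁻¹' T, hTc.preimage Subtype.val_injective, ?_⟩
  intro p
  rw [closure_subtype]
  have : Subtype.val '' ((Subtype.val ⁻¹' T) : Set s) = T := by
    rw [Subtype.image_preimage_coe]
    exact inter_eq_right.mpr hTs
  rw [this]
  exact hTd p.2
end

section
/- For a topological space X, the countable power X^ω (with the product topology) is hereditarily separable if and only if X^n is hereditarily separable for every natural number n. -/
/-- Hereditary separability is preserved under continuous surjections. -/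
lemma HereditarilySeparable.of_continuous_surjective {A B : Type*} [TopologicalSpace A]
    [TopologicalSpace B] (h : HereditarilySeparable A) {f : A → B} (hf : Continuous f)
    (hsurj : Function.Surjective f) : HereditarilySeparable B := by
  intro s
  haveI := h (f ⁻¹' s)
  have hg : Continuous fun a : ↥(f ⁻¹' s) => (⟨f a.1, a.2⟩ : ↥s) :=
    Continuous.subtype_mk (hf.comp continuous_subtype_val) _
  have hgs : Function.Surjective fun a : ↥(f ⁻¹' s) => (⟨f a.1, a.2⟩ : ↥s) := by
    rintro ⟨b, hb⟩
    obtain ⟨a, rfl⟩ := hsurj b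
    exact ⟨⟨a, hb⟩, rfl⟩
  exact hgs.denseRange.separableSpace hg

/-- `X^ω` is hereditarily separable iff `X^n` is hereditarily separable for all `n < ω`. -/
theorem hs_countable_power_iff_finite_powers {X : Type*} [TopologicalSpace X] :
    HereditarilySeparable (ℕ → X) ↔ ∀ n : ℕ, HereditarilySeparable (Fin n → X) := by
  constructor
  · intro h n
    by_cases hX : Nonempty X
    · obtain ⟨x₀⟩ := hX
      refine h.of_continuous_surjective (f := fun f (i : Fin n) => f i)
        (by continuity) ?_
      intro g
      exact ⟨fun i => if hi : i < n then g ⟨i, hi⟩ else x₀, by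
        funext i; simp [i.isLt]⟩
    · haveI : IsEmpty X := not_nonempty_iff.mp hX
      haveI : Subsingleton (Fin n → X) :=
        ⟨fun f g => funext fun i => (IsEmpty.false (f i)).elim⟩
      intro s
      infer_instance
  · intro h Y
    -- restriction maps
    set r : ∀ n, (ℕ → X) → (Fin n → X) := fun n f i => f i with hr
    haveI : ∀ n, TopologicalSpace.SeparableSpace ↥(r n '' Y) := fun n => h n _
    have hex : ∀ n, ∃ D : Set ↥(r n '' Y), D.Countable ∧ Dense D := fun n =>
      TopologicalSpace.exists_countable_dense _
    choose Dn hDnc hDnd using hex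
    have hmem : ∀ n (d : ↥(r n '' Y)), ∃ y, y ∈ Y ∧ r n y = d.1 := fun n d => d.2
    choose lift hliftY hliftr using hmem
    set D : Set (ℕ → X) := ⋃ n, lift n '' Dn n with hD
    have hDc : D.Countable := Set.countable_iUnion fun n => (hDnc n).image _
    have hDY : D ⊆ Y := by
      rintro x hx
      simp only [hD, Set.mem_iUnion, Set.mem_image] at hx
      obtain ⟨n, d, _, rfl⟩ := hx
      exact hliftY n d
    have hdense : Y ⊆ closure D := by
      intro y hy
      rw [mem_closure_iff]
      intro U hU hyU
      obtain ⟨I, u, hu, hUsub⟩ := isOpen_pi_iff.mp hU y hyU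
      obtain ⟨n, hn⟩ : ∃ n, ∀ i ∈ I, i < n := ⟨(I.sup id) + 1, fun i hi =>
        Nat.lt_succ_of_le (Finset.le_sup (f := id) hi)⟩
      -- the corresponding open set in `Fin n → X`
      set V : Set (Fin n → X) := Set.pi {i : Fin n | (i : ℕ) ∈ I} (fun i => u i) with hV
      have hVopen : IsOpen V := isOpen_set_pi (Set.toFinite _)
        (fun i hi => (hu i hi).1)
      have hyV : r n y ∈ V := fun i hi => (hu i hi).2
      have hp : r n y ∈ r n '' Y := ⟨y, hy, rfl⟩
      have hopen : IsOpen (Subtype.val ⁻¹' V : Set ↥(r n '' Y)) :=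
        hVopen.preimage continuous_subtype_val
      obtain ⟨d, hdV, hdD⟩ := (hDnd n).inter_open_nonempty _ hopen ⟨⟨r n y, hp⟩, hyV⟩
      refine ⟨lift n d, ?_, Set.mem_iUnion.mpr ⟨n, Set.mem_image_of_mem _ hdD⟩⟩
      apply hUsub
      intro i hi
      have h1 : lift n d i = d.1 ⟨i, hn i hi⟩ := by
        rw [← hliftr n d]
      have h2 : d.1 ⟨i, hn i hi⟩ ∈ u i := hdV ⟨i, hn i hi⟩ hi
      rw [h1]; exact h2
    refine ⟨⟨Subtype.val ⁻¹' D, hDc.preimage Subtype.val_injective, ?_⟩⟩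
    rw [Subtype.dense_iff]
    intro y hy
    have : Subtype.val '' (Subtype.val ⁻¹' D : Set ↥Y) = D := by
      rw [Subtype.image_preimage_coe]
      exact Set.inter_eq_right.mpr hDY
    rw [this]
    exact hdense hy
end

section
/- Let φ : Y → X be a continuous map between Hausdorff topological spaces and let Z = Y ∪̇_φ X. If Y is locally compact, then Z is Hausdorff. -/
/-- The topology of `Z = Y ∪̇_φ X` on the disjoint union `X ⊕ Y`: it is generated by the base
consisting of (a) all open subsets of `Y` and
(b) all sets `[U,K] = U ∪ (φ⁻¹(U) \ K)` with `U` open in `X` and `K` compact in `Y`. -/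
def dotCup {X Y : Type*} [TopologicalSpace X] [TopologicalSpace Y] (φ : Y → X) :
    TopologicalSpace (X ⊕ Y) :=
  TopologicalSpace.generateFrom
    ({s | ∃ V : Set Y, IsOpen V ∧ s = Sum.inr '' V} ∪
     {s | ∃ (U : Set X) (K : Set Y), IsOpen U ∧ IsCompact K ∧
        s = Sum.inl '' U ∪ Sum.inr '' (φ ⁻¹' U \ K)})

/-- If `Y` is locally compact, then `Z = Y ∪̇_φ X` is Hausdorff. -/
theorem dotCup_t2 {X Y : Type*} [TopologicalSpace X] [TopologicalSpace Y]
    [T2Space X] [T2Space Y] [LocallyCompactSpace Y]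
    (φ : Y → X) (hφ : Continuous φ) :
    @T2Space (X ⊕ Y) (dotCup φ) := by
  letI := dotCup φ
  constructor
  rintro (x1 | y1) (x2 | y2) hne
  · -- inl, inl
    obtain ⟨U1, U2, hU1, hU2, hx1, hx2, hd⟩ :=
      t2_separation (show x1 ≠ x2 by simpa using hne)
    refine ⟨Sum.inl '' U1 ∪ Sum.inr '' (φ ⁻¹' U1 \ ∅),
            Sum.inl '' U2 ∪ Sum.inr '' (φ ⁻¹' U2 \ ∅), ?_, ?_, ?_, ?_, ?_⟩
    · exact TopologicalSpace.isOpen_generateFrom_of_mem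
        (Or.inr ⟨U1, ∅, hU1, isCompact_empty, rfl⟩)
    · exact TopologicalSpace.isOpen_generateFrom_of_mem
        (Or.inr ⟨U2, ∅, hU2, isCompact_empty, rfl⟩)
    · exact Or.inl ⟨x1, hx1, rfl⟩
    · exact Or.inl ⟨x2, hx2, rfl⟩
    · rw [Set.disjoint_left]
      rintro (a | b) h1 h2 <;> simp_all <;> exact hd.le_bot ⟨h1, h2⟩
  · -- inl, inr
    obtain ⟨K, hK, hKy⟩ := exists_compact_mem_nhds y2
    refine ⟨Sum.inl '' (Set.univ : Set X) ∪ Sum.inr '' (φ ⁻¹' Set.univ \ K),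
            Sum.inr '' interior K, ?_, ?_, ?_, ?_, ?_⟩
    · exact TopologicalSpace.isOpen_generateFrom_of_mem
        (Or.inr ⟨Set.univ, K, isOpen_univ, hK, rfl⟩)
    · exact TopologicalSpace.isOpen_generateFrom_of_mem
        (Or.inl ⟨interior K, isOpen_interior, rfl⟩)
    · exact Or.inl ⟨x1, trivial, rfl⟩
    · exact ⟨y2, mem_interior_iff_mem_nhds.mpr hKy, rfl⟩
    · rw [Set.disjoint_left]
      rintro (a | b) h1 h2 <;> simp_all
      exact h1 (interior_subset h2)
  · -- inr, inl
    obtain ⟨K, hK, hKy⟩ := exists_compact_mem_nhds y1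
    refine ⟨Sum.inr '' interior K,
            Sum.inl '' (Set.univ : Set X) ∪ Sum.inr '' (φ ⁻¹' Set.univ \ K), ?_, ?_, ?_, ?_, ?_⟩
    · exact TopologicalSpace.isOpen_generateFrom_of_mem
        (Or.inl ⟨interior K, isOpen_interior, rfl⟩)
    · exact TopologicalSpace.isOpen_generateFrom_of_mem
        (Or.inr ⟨Set.univ, K, isOpen_univ, hK, rfl⟩)
    · exact ⟨y1, mem_interior_iff_mem_nhds.mpr hKy, rfl⟩
    · exact Or.inl ⟨x2, trivial, rfl⟩
    · rw [Set.disjoint_left]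
      rintro (a | b) h1 h2 <;> simp_all
      exact h2 (interior_subset h1)
  · -- inr, inr
    obtain ⟨V1, V2, hV1, hV2, hy1, hy2, hd⟩ :=
      t2_separation (show y1 ≠ y2 by simpa using hne)
    refine ⟨Sum.inr '' V1, Sum.inr '' V2, ?_, ?_, ⟨y1, hy1, rfl⟩, ⟨y2, hy2, rfl⟩, ?_⟩
    · exact TopologicalSpace.isOpen_generateFrom_of_mem (Or.inl ⟨V1, hV1, rfl⟩)
    · exact TopologicalSpace.isOpen_generateFrom_of_mem (Or.inl ⟨V2, hV2, rfl⟩)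
    · rw [Set.disjoint_left]
      rintro (a | b) h1 h2 <;> simp_all
      exact hd.le_bot ⟨h1, h2⟩
end

section
/- Let φ : Y → X be a continuous map between Hausdorff topological spaces and let Z = Y ∪̇_φ X. If X is compact, then Z is compact. -/
open Set Filter

lemma dotCup_inr_continuous {X Y : Type*} [TopologicalSpace X] [TopologicalSpace Y]
    [T2Space X] [T2Space Y] (φ : Y → X) (hφ : Continuous φ) :
    @Continuous Y (X ⊕ Y) _ (dotCup φ) Sum.inr := by
  rw [dotCup, continuous_generateFrom_iff]
  rintro s (⟨V, hV, rfl⟩ | ⟨U, K, hU, hK, rfl⟩)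
  · rwa [Set.preimage_image_eq _ Sum.inr_injective]
  · have : Sum.inr ⁻¹' (Sum.inl '' U ∪ Sum.inr '' (φ ⁻¹' U \ K)) = φ ⁻¹' U \ K := by
      ext y; simp
    rw [this]
    exact (hU.preimage hφ).sdiff hK.isClosed

/-- If `X` is compact, then `Z = Y ∪̇_φ X` is compact. -/
theorem dotCup_compact {X Y : Type*} [TopologicalSpace X] [TopologicalSpace Y]
    [T2Space X] [T2Space Y] [CompactSpace X]
    (φ : Y → X) (hφ : Continuous φ) :
    @CompactSpace (X ⊕ Y) (dotCup φ) := by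
  letI : TopologicalSpace (X ⊕ Y) := dotCup φ
  constructor
  rw [isCompact_iff_ultrafilter_le_nhds]
  intro F _
  by_cases h : ∃ K : Set Y, IsCompact K ∧ Sum.inr '' K ∈ F
  · -- F contains a compact set, hence converges
    obtain ⟨K, hK, hKF⟩ := h
    have hcomp : IsCompact (Sum.inr '' K : Set (X ⊕ Y)) :=
      hK.image (dotCup_inr_continuous φ hφ)
    obtain ⟨z, _, hz⟩ := hcomp.ultrafilter_le_nhds' F hKF
    exact ⟨z, mem_univ z, hz⟩
  · push_neg at h
    -- push F to X along Sum.elim id φ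
    set G : Ultrafilter X := F.map (Sum.elim id φ)
    obtain ⟨x, -, hx⟩ := isCompact_univ.ultrafilter_le_nhds G (by simp)
    refine ⟨Sum.inl x, mem_univ _, ?_⟩
    show (F : Filter (X ⊕ Y)) ≤ @nhds _ (dotCup φ) (Sum.inl x)
    rw [dotCup, TopologicalSpace.nhds_generateFrom, le_iInf₂_iff]
    rintro s ⟨hxs, (⟨V, hV, rfl⟩ | ⟨U, K, hU, hK, rfl⟩)⟩
    · simp at hxs
    · rw [le_principal_iff]
      have hxU : x ∈ U := by
        rcases hxs with h1 | h2
        · rcases h1 with ⟨x', hx', hx''⟩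
          rwa [(Sum.inl_injective hx'' : x' = x)] at hx'
        · rcases h2 with ⟨y, _, hy⟩; exact absurd hy (by simp)
      have hUG : U ∈ G := hx (hU.mem_nhds hxU)
      have h1 : (Sum.elim id φ) ⁻¹' U ∈ F := hUG
      have h2 : (Sum.inr '' K : Set (X ⊕ Y))ᶜ ∈ F :=
        Ultrafilter.compl_mem_iff_notMem.2 (h K hK)
      refine Filter.mem_of_superset (Filter.inter_mem h1 h2) ?_
      rintro z ⟨hz1, hz2⟩
      cases z with
      | inl a => exact Or.inl ⟨a, hz1, rfl⟩
      | inr y =>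
        refine Or.inr ⟨y, ⟨hz1, fun hy => hz2 ⟨y, hy, rfl⟩⟩, rfl⟩
end

section
/- Let φ : Y → X be a continuous map between Hausdorff topological spaces and let Z = Y ∪̇_φ X. If X and Y are first countable, X is compact, Y is locally compact, and the preimage φ⁻¹(x) of every point x ∈ X is compact, then Z is first countable. -/
/-!
`Y` sits in `Z` as an open subspace, so at its points `Z` is first countable because `Y` is.
At a point `x` of `X`, fix a compact set `C` whose interior contains the compact fiber `φ⁻¹(x)`.
For a basic set `[U, K] ∋ x`, the compact set `φ(K \ int C)` is closed and misses `x`, so shrinking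
`U` away from it gives `[U', C] ⊆ [U, K]`. Hence the neighbourhood filter of `x` in `Z` is
`𝓝 x` on `X` joined with `φ⁻¹(𝓝 x) ⊓ 𝓟 Cᶜ` on `Y`, which is countably generated.
-/

open Set Filter Topology TopologicalSpace

section DotCup

variable {X Y : Type*} [TopologicalSpace X] [TopologicalSpace Y] (φ : Y → X)

theorem isOpen_dotCup_bracket {U : Set X} {K : Set Y} (hU : IsOpen U) (hK : IsCompact K) :
    IsOpen[dotCup φ] (Sum.inl '' U ∪ Sum.inr '' (φ ⁻¹' U \ K)) :=
  isOpen_generateFrom_of_mem (Or.inr ⟨U, K, hU, hK, rfl⟩)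

theorem isOpenMap_inr_dotCup : @IsOpenMap _ _ _ (dotCup φ) (Sum.inr : Y → X ⊕ Y) :=
  fun V hV => isOpen_generateFrom_of_mem (Or.inl ⟨V, hV, rfl⟩)

theorem continuous_inr_dotCup [T2Space Y] (hφ : Continuous φ) :
    Continuous[_, dotCup φ] (Sum.inr : Y → X ⊕ Y) := by
  refine continuous_generateFrom_iff.2 ?_
  rintro _ (⟨V, hV, rfl⟩ | ⟨U, K, hU, hK, rfl⟩)
  · rwa [preimage_image_eq _ Sum.inr_injective]
  · rw [preimage_union, preimage_inr_image_inl, empty_union,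
      preimage_image_eq _ Sum.inr_injective]
    exact (hU.preimage hφ).sdiff hK.isClosed

theorem nhds_dotCup_inr [T2Space Y] (hφ : Continuous φ) (y : Y) :
    @nhds _ (dotCup φ) (Sum.inr y) = map Sum.inr (𝓝 y) :=
  let := dotCup φ
  ((isOpenMap_inr_dotCup φ).map_nhds_eq (continuous_inr_dotCup φ hφ).continuousAt).symm

theorem compl_mem_comap_nhds_inf_principal_compl [T2Space X] (hφ : Continuous φ) {x : X}
    {C K : Set Y} (hfC : φ ⁻¹' {x} ⊆ interior C) (hK : IsCompact K) :
    Kᶜ ∈ comap φ (𝓝 x) ⊓ 𝓟 Cᶜ := by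
  have hx : x ∉ φ '' (K \ interior C) := by
    rintro ⟨y, ⟨-, hyC⟩, rfl⟩
    exact hyC (hfC rfl)
  have hW : (φ '' (K \ interior C))ᶜ ∈ 𝓝 x :=
    ((hK.diff isOpen_interior).image hφ).isClosed.isOpen_compl.mem_nhds hx
  refine mem_inf_principal.2 (mem_of_superset (preimage_mem_comap hW) ?_)
  rintro y hyW hyC hyK
  exact hyW ⟨y, ⟨hyK, fun h => hyC (interior_subset h)⟩, rfl⟩

theorem nhds_dotCup_inl [T2Space X] (hφ : Continuous φ) {x : X} {C : Set Y}
    (hC : IsCompact C) (hfC : φ ⁻¹' {x} ⊆ interior C) :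
    @nhds _ (dotCup φ) (Sum.inl x) = map Sum.inl (𝓝 x) ⊔ map Sum.inr (comap φ (𝓝 x) ⊓ 𝓟 Cᶜ) := by
  let := dotCup φ
  refine le_antisymm (fun s hs => ?_) (tendsto_id'.1 (tendsto_nhds_generateFrom_iff.2 ?_))
  · obtain ⟨hsX, hsY⟩ := mem_sup.1 hs
    obtain ⟨W, hW, hWs⟩ := mem_inf_principal.1 (mem_map.1 hsY) |> mem_comap.1
    obtain ⟨U, hUs, hU, hxU⟩ := mem_nhds_iff.1 (inter_mem (mem_map.1 hsX) hW)
    refine mem_nhds_iff.2 ⟨_, ?_, isOpen_dotCup_bracket φ hU hC, Or.inl ⟨x, hxU, rfl⟩⟩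
    rintro _ (⟨a, ha, rfl⟩ | ⟨y, ⟨hyU, hyC⟩, rfl⟩)
    · exact (hUs ha).1
    · exact hWs (hUs hyU).2 hyC
  · rintro _ (⟨V, -, rfl⟩ | ⟨U, K, hU, hK, rfl⟩) hx
    · simp at hx
    · have hxU : x ∈ U := by simpa using hx
      simp only [preimage_id, mem_sup, mem_map, preimage_union, preimage_inl_image_inr,
        preimage_inr_image_inl, union_empty, empty_union, sdiff_eq,
        preimage_image_eq _ Sum.inl_injective, preimage_image_eq _ Sum.inr_injective]
      exact ⟨hU.mem_nhds hxU, inter_mem (mem_inf_of_left (preimage_mem_comap (hU.mem_nhds hxU)))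
          (compl_mem_comap_nhds_inf_principal_compl φ hφ hfC hK)⟩

end DotCup

theorem dotCup_firstCountable_general {X Y : Type*} [TopologicalSpace X] [TopologicalSpace Y]
    [T2Space X] [T2Space Y]
    [FirstCountableTopology X] [FirstCountableTopology Y]
    [LocallyCompactSpace Y]
    (φ : Y → X) (hφ : Continuous φ) (hfib : ∀ x : X, IsCompact (φ ⁻¹' {x})) :
    @FirstCountableTopology (X ⊕ Y) (dotCup φ) := by
  refine @FirstCountableTopology.mk _ (dotCup φ) fun z => ?_
  cases z with
  | inl x =>
    obtain ⟨C, hC, hfC⟩ := exists_compact_superset (hfib x)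
    rw [nhds_dotCup_inl φ hφ hC hfC]
    infer_instance
  | inr y =>
    rw [nhds_dotCup_inr φ hφ y]
    infer_instance

/-- If `X, Y` are first countable, `X` is compact, `Y` is locally compact, and every fiber
`φ⁻¹(x)` is compact, then `Z = Y ∪̇_φ X` is first countable. -/
theorem dotCup_firstCountable {X Y : Type*} [TopologicalSpace X] [TopologicalSpace Y]
    [T2Space X] [T2Space Y]
    [FirstCountableTopology X] [FirstCountableTopology Y]
    [CompactSpace X] [LocallyCompactSpace Y]
    (φ : Y → X) (hφ : Continuous φ) (hfib : ∀ x : X, IsCompact (φ ⁻¹' {x})) :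
    @FirstCountableTopology (X ⊕ Y) (dotCup φ) :=
  dotCup_firstCountable_general φ hφ hfib
end

section
/- Let φ : Y → X be a continuous map between Hausdorff topological spaces and let Z = Y ∪̇_φ X. If X and Y are zero-dimensional, X is compact, and Y is locally compact, then Z is zero-dimensional. -/
open TopologicalSpace Set Topology

/-- A space is zero-dimensional iff it has a base of clopen sets. -/
def ZeroDimensional (W : Type*) [TopologicalSpace W] : Prop :=
  ∃ B : Set (Set W), (∀ s ∈ B, IsClopen s) ∧ TopologicalSpace.IsTopologicalBasis B

/-! Compact clopen subsets of `Y` form a base, and every compact subset of `Y` lies in one of them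
(cover it by finitely many). Hence the sets `V` and `[U,K]` with `V, K ⊆ Y` compact clopen and
`U ⊆ X` clopen refine the defining base of `Z`; they are closed under intersection, and they are
clopen because `Z \ V = [X,V]` and `Z \ [U,K] = [X \ U, ∅] ∪ K`. -/

section LocallyCompact

variable {Y : Type*} [TopologicalSpace Y] [LocallyCompactSpace Y]

theorem ZeroDimensional.exists_isCompact_isClopen_subset (hY : ZeroDimensional Y) {y : Y}
    {V : Set Y} (hV : IsOpen V) (hy : y ∈ V) :
    ∃ W : Set Y, IsCompact W ∧ IsClopen W ∧ y ∈ W ∧ W ⊆ V := by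
  obtain ⟨K, hK, hyK, hKV⟩ := exists_compact_subset hV hy
  obtain ⟨B, hB_clopen, hB⟩ := hY
  obtain ⟨W, hWB, hyW, hWK⟩ := hB.exists_subset_of_mem_open hyK isOpen_interior
  have hWK : W ⊆ K := hWK.trans interior_subset
  exact ⟨W, hK.of_isClosed_subset (hB_clopen W hWB).isClosed hWK, hB_clopen W hWB, hyW,
    hWK.trans hKV⟩

theorem ZeroDimensional.exists_isCompact_isClopen_superset (hY : ZeroDimensional Y)
    {K : Set Y} (hK : IsCompact K) : ∃ K' : Set Y, IsCompact K' ∧ IsClopen K' ∧ K ⊆ K' := by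
  choose W hW_compact hW_clopen hyW _ using fun y : Y =>
    hY.exists_isCompact_isClopen_subset isOpen_univ (mem_univ y)
  obtain ⟨t, ht⟩ := hK.elim_finite_subcover W (fun y => (hW_clopen y).isOpen)
    (fun y _ => mem_iUnion.2 ⟨y, hyW y⟩)
  exact ⟨⋃ y ∈ t, W y, t.isCompact_biUnion fun y _ => hW_compact y,
    isClopen_biUnion_finset fun y _ => hW_clopen y, ht⟩

end LocallyCompact

theorem isOpen_generateFrom_of_forall_exists_subset {α : Type*} {B : Set (Set α)} {s : Set α}
    (h : ∀ a ∈ s, ∃ b ∈ B, a ∈ b ∧ b ⊆ s) : IsOpen[generateFrom B] s := by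
  let := generateFrom B
  refine isOpen_iff_forall_mem_open.2 fun a ha => ?_
  obtain ⟨b, hbB, hab, hbs⟩ := h a ha
  exact ⟨b, hbs, isOpen_generateFrom_of_mem hbB, hab⟩

namespace DotCup

variable {X Y : Type*} (φ : Y → X)

/-- The basic open set `[U,K]`. -/
def tube (U : Set X) (K : Set Y) : Set (X ⊕ Y) :=
  Sum.inl '' U ∪ Sum.inr '' (φ ⁻¹' U \ K)

variable {φ}

theorem tube_mono {U U' : Set X} {K K' : Set Y} (hU : U' ⊆ U) (hK : K ⊆ K') :
    tube φ U' K' ⊆ tube φ U K :=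
  union_subset_union (image_mono hU) (image_mono (sdiff_subset_sdiff (preimage_mono hU) hK))

theorem tube_inter_tube (U U' : Set X) (K K' : Set Y) :
    tube φ U K ∩ tube φ U' K' = tube φ (U ∩ U') (K ∪ K') := by
  ext (x | y)
  · simp [tube]
  · simp [tube]; tauto

theorem inr_image_inter_tube (V : Set Y) (U : Set X) (K : Set Y) :
    Sum.inr '' V ∩ tube φ U K = Sum.inr '' (V ∩ (φ ⁻¹' U \ K)) := by
  ext (x | y) <;> simp [tube]

theorem compl_inr_image (V : Set Y) : (Sum.inr '' V)ᶜ = tube φ univ V := by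
  ext (x | y) <;> simp [tube]

theorem compl_tube (U : Set X) (K : Set Y) :
    (tube φ U K)ᶜ = tube φ Uᶜ ∅ ∪ Sum.inr '' K := by
  ext (x | y)
  · simp [tube]
  · simp [tube]; tauto

variable [TopologicalSpace X] [TopologicalSpace Y]

theorem isOpen_inr_image {V : Set Y} (hV : IsOpen V) : IsOpen[dotCup φ] (Sum.inr '' V) :=
  isOpen_generateFrom_of_mem (Or.inl ⟨V, hV, rfl⟩)

theorem isOpen_tube {U : Set X} {K : Set Y} (hU : IsOpen U) (hK : IsCompact K) :
    IsOpen[dotCup φ] (tube φ U K) :=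
  isOpen_generateFrom_of_mem (Or.inr ⟨U, K, hU, hK, rfl⟩)

theorem isClosed_inr_image {V : Set Y} (hV : IsCompact V) :
    IsClosed[dotCup φ] (Sum.inr '' V) := by
  let := dotCup φ
  rw [← isOpen_compl_iff, compl_inr_image]
  exact isOpen_tube isOpen_univ hV

theorem isClosed_tube {U : Set X} {K : Set Y} (hU : IsClosed U) (hK : IsOpen K) :
    IsClosed[dotCup φ] (tube φ U K) := by
  let := dotCup φ
  rw [← isOpen_compl_iff, compl_tube]
  exact (isOpen_tube hU.isOpen_compl isCompact_empty).union (isOpen_inr_image hK)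

variable (φ)

def clopenBasis : Set (Set (X ⊕ Y)) :=
  {s | ∃ V : Set Y, IsCompact V ∧ IsClopen V ∧ s = Sum.inr '' V} ∪
    {s | ∃ (U : Set X) (K : Set Y), IsClopen U ∧ IsCompact K ∧ IsClopen K ∧ s = tube φ U K}

variable {φ}

theorem isClopen_of_mem_clopenBasis {s : Set (X ⊕ Y)} (hs : s ∈ clopenBasis φ) :
    @IsClopen _ (dotCup φ) s := by
  rcases hs with ⟨V, hV_compact, hV_clopen, rfl⟩ | ⟨U, K, hU, hK_compact, hK_clopen, rfl⟩
  · exact ⟨isClosed_inr_image hV_compact, isOpen_inr_image hV_clopen.isOpen⟩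
  · exact ⟨isClosed_tube hU.isClosed hK_clopen.isOpen, isOpen_tube hU.isOpen hK_compact⟩

theorem inter_mem_clopenBasis (hφ : Continuous φ) {s t : Set (X ⊕ Y)} (hs : s ∈ clopenBasis φ)
    (ht : t ∈ clopenBasis φ) : s ∩ t ∈ clopenBasis φ := by
  have hdiff {U : Set X} {K : Set Y} (hU : IsClopen U) (hK : IsClopen K) :
      IsClopen (φ ⁻¹' U \ K) := (hU.preimage hφ).diff hK
  rcases hs with ⟨V, hV_compact, hV_clopen, rfl⟩ | ⟨U, K, hU, hK_compact, hK_clopen, rfl⟩ <;>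
    rcases ht with ⟨V', hV'_compact, hV'_clopen, rfl⟩ | ⟨U', K', hU', hK'_compact, hK'_clopen, rfl⟩
  · exact Or.inl ⟨V ∩ V', hV_compact.inter_right hV'_clopen.isClosed,
      hV_clopen.inter hV'_clopen, (image_inter Sum.inr_injective).symm⟩
  · exact Or.inl ⟨_, hV_compact.inter_right (hdiff hU' hK'_clopen).isClosed,
      hV_clopen.inter (hdiff hU' hK'_clopen), inr_image_inter_tube V U' K'⟩
  · exact Or.inl ⟨_, hV'_compact.inter_right (hdiff hU hK_clopen).isClosed,
      hV'_clopen.inter (hdiff hU hK_clopen), by rw [inter_comm, inr_image_inter_tube]⟩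
  · exact Or.inr ⟨U ∩ U', K ∪ K', hU.inter hU', hK_compact.union hK'_compact,
      hK_clopen.union hK'_clopen, tube_inter_tube U U' K K'⟩

section Refinement

variable [LocallyCompactSpace Y] (hY : ZeroDimensional Y)
include hY

theorem exists_mem_clopenBasis_subset_inr_image {V : Set Y} (hV : IsOpen V) {y : Y}
    (hy : y ∈ V) : ∃ b ∈ clopenBasis φ, Sum.inr y ∈ b ∧ b ⊆ Sum.inr '' V := by
  obtain ⟨W, hW_compact, hW_clopen, hyW, hWV⟩ := hY.exists_isCompact_isClopen_subset hV hy
  exact ⟨_, Or.inl ⟨W, hW_compact, hW_clopen, rfl⟩, mem_image_of_mem _ hyW, image_mono hWV⟩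

theorem exists_mem_clopenBasis_subset_tube [T2Space Y] (hφ : Continuous φ)
    (hX : ZeroDimensional X) {U : Set X} {K : Set Y} (hU : IsOpen U) (hK : IsCompact K)
    {a : X ⊕ Y} (ha : a ∈ tube φ U K) : ∃ b ∈ clopenBasis φ, a ∈ b ∧ b ⊆ tube φ U K := by
  rcases ha with ⟨x, hx, rfl⟩ | ⟨y, hy, rfl⟩
  · obtain ⟨BX, hBX_clopen, hBX⟩ := hX
    obtain ⟨U', hU'B, hxU', hU'U⟩ := hBX.exists_subset_of_mem_open hx hU
    obtain ⟨K', hK'_compact, hK'_clopen, hKK'⟩ := hY.exists_isCompact_isClopen_superset hK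
    exact ⟨tube φ U' K', Or.inr ⟨U', K', hBX_clopen U' hU'B, hK'_compact, hK'_clopen, rfl⟩,
      Or.inl (mem_image_of_mem _ hxU'), tube_mono hU'U hKK'⟩
  · obtain ⟨b, hb, hyb, hbV⟩ := exists_mem_clopenBasis_subset_inr_image (φ := φ) hY
      ((hU.preimage hφ).sdiff hK.isClosed) hy
    exact ⟨b, hb, hyb, hbV.trans subset_union_right⟩

theorem topology_eq_generateFrom_clopenBasis [T2Space Y] (hφ : Continuous φ)
    (hX : ZeroDimensional X) : dotCup φ = generateFrom (clopenBasis φ) := by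
  let := dotCup φ
  refine le_antisymm (le_generateFrom fun s hs => (isClopen_of_mem_clopenBasis hs).isOpen)
    (le_generateFrom ?_)
  rintro s (⟨V, hV, rfl⟩ | ⟨U, K, hU, hK, rfl⟩) <;>
    refine isOpen_generateFrom_of_forall_exists_subset fun a ha => ?_
  · obtain ⟨y, hy, rfl⟩ := ha
    exact exists_mem_clopenBasis_subset_inr_image hY hV hy
  · exact exists_mem_clopenBasis_subset_tube hY hφ hX hU hK ha

end Refinement

end DotCup

theorem dotCup_zeroDimensional_general {X Y : Type*} [TopologicalSpace X] [TopologicalSpace Y]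
    [T2Space Y] [LocallyCompactSpace Y]
    (φ : Y → X) (hφ : Continuous φ)
    (hX : ZeroDimensional X) (hY : ZeroDimensional Y) :
    @ZeroDimensional (X ⊕ Y) (dotCup φ) := by
  let := dotCup φ
  refine ⟨insert univ (DotCup.clopenBasis φ), ?_, isTopologicalBasis_of_subbasis_of_inter
    (DotCup.topology_eq_generateFrom_clopenBasis hY hφ hX)
    fun _ hs _ ht => DotCup.inter_mem_clopenBasis hφ hs ht⟩
  rintro s (rfl | hs)
  exacts [isClopen_univ, DotCup.isClopen_of_mem_clopenBasis hs]

/-- If `X, Y` are zero-dimensional, `X` is compact and `Y` is locally compact, then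
`Z = Y ∪̇_φ X` is zero-dimensional. -/
theorem dotCup_zeroDimensional {X Y : Type*} [TopologicalSpace X] [TopologicalSpace Y]
    [T2Space X] [T2Space Y] [CompactSpace X] [LocallyCompactSpace Y]
    (φ : Y → X) (hφ : Continuous φ)
    (hX : ZeroDimensional X) (hY : ZeroDimensional Y) :
    @ZeroDimensional (X ⊕ Y) (dotCup φ) :=
  dotCup_zeroDimensional_general φ hφ hX hY
end
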